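/- Let n_1, n_2 be nonnegative integers, λ1 a special symplectic partition of 2n_1 and λ2 a special orthogonal partition of 2n_2. Then the sequence λ1 + λ2 + ξ is nonincreasing and is a symplectic partition of 2(n_1+n_2). -/

import Mathlib

/-!
The ends of the intervals are read off from parities. For a nonincreasing `λ`, the number of
parts larger than a value `v` has the parity of the number of values above `v` of odd
multiplicity; the latter decides whether `v` is the top (resp. bottom) of its interval. Hence
`j = j_min(Δ)` for an interval `Δ` of `λ1` iff `j` is odd, `λ_{1,j}` is even and `j` starts a
block of equal parts, and `j = j_max(Δ)` iff `j` is even, `λ_{1,j}` is even and `j` ends a block;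
likewise for `λ2` with `λ_{2,j}` odd. So `ξ` is `1` at the odd starts and `-1` at the even ends
of the blocks of `λ1 + λ2` on which `λ1` is even and `λ2` odd.

Monotonicity of `λ1 + λ2 + ξ` is then a local check, and `ξ_{2i} + ξ_{2i+1}` telescopes, by
speciality, to a total sum `0`. A block of odd value `v` of `λ1 + λ2 + ξ` comes from a block of
`λ1 + λ2`: if `λ1` is odd there, speciality together with the even multiplicities of odd parts
of `λ1` and even parts of `λ2` makes the block start at an odd and end at an even index; if `λ1`
is even there, `ξ` trims the block to one with even start and odd end. Either way `v` has even
multiplicity.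
-/

open Classical

namespace Wald

/-- `S f k = λ_1 + … + λ_k` (partitions are indexed from 1; index 0 is unused). -/
def S (f : ℕ → ℕ) (k : ℕ) : ℕ := ∑ j ∈ Finset.Icc 1 k, f j

/-- `f` represents a partition of `N`: nonincreasing on indices `≥ 1`,
finitely many nonzero terms, with total sum `N`. -/
structure IsPartition (f : ℕ → ℕ) (N : ℕ) : Prop where
  mono : ∀ ⦃j k : ℕ⦄, 1 ≤ j → j ≤ k → f k ≤ f j
  fin : ∃ m, ∀ j, m < j → f j = 0
  total : ∀ m, (∀ j, m < j → f j = 0) → S f m = N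

/-- multiplicity of `i` as a term of the partition -/
noncomputable def mult (f : ℕ → ℕ) (i : ℕ) : ℕ := Set.ncard {j : ℕ | 1 ≤ j ∧ f j = i}

/-- dominance order: `Dom f g ↔ f ≤ g` -/
def Dom (f g : ℕ → ℕ) : Prop := ∀ k, S f k ≤ S g k

/-- transposed partition: `(transpose f) j = #{i ≥ 1 : f i ≥ j}` for `j ≥ 1` -/
noncomputable def transpose (f : ℕ → ℕ) : ℕ → ℕ :=
  fun j => Set.ncard {i : ℕ | 1 ≤ i ∧ 1 ≤ j ∧ j ≤ f i}

/-- union of two partitions (all terms listed together in nonincreasing order);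
it is characterized by `transpose (unionP f g) = transpose f + transpose g`. -/
noncomputable def unionP (f g : ℕ → ℕ) : ℕ → ℕ :=
  transpose (fun j => transpose f j + transpose g j)

/-- the partition `(1)` -/
def one1 : ℕ → ℕ := fun j => if j = 1 then 1 else 0

/-- symplectic partition: every odd `i ≥ 1` has even multiplicity -/
def Symp (f : ℕ → ℕ) : Prop := ∀ i, Odd i → Even (mult f i)

/-- orthogonal partition: every even `i ≥ 2` has even multiplicity -/
def Orth (f : ℕ → ℕ) : Prop := ∀ i, Even i → 1 ≤ i → Even (mult f i)

/-- `λ_{2j-1} ≡ λ_{2j} (mod 2)` for all `j ≥ 1` (speciality for symplectic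
partitions of `2n` and orthogonal partitions of `2n`). -/
def SpecialPairs (f : ℕ → ℕ) : Prop := ∀ j, 1 ≤ j → f (2*j - 1) % 2 = f (2*j) % 2

/-- speciality for orthogonal partitions of `2n+1`: `λ_1` odd and
`λ_{2j} ≡ λ_{2j+1} (mod 2)` for all `j ≥ 1`. -/
def SpecialOrthOdd (f : ℕ → ℕ) : Prop :=
  Odd (f 1) ∧ ∀ j, 1 ≤ j → f (2*j) % 2 = f (2*j + 1) % 2

/-- `Jord_bp` for symplectic partitions: even `i ≥ 2` with positive multiplicity -/
def JordbpS (f : ℕ → ℕ) : Set ℕ := {i | Even i ∧ 2 ≤ i ∧ 1 ≤ mult f i}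

/-- `Jord_bp` for orthogonal partitions: odd `i ≥ 1` with positive multiplicity -/
def JordbpO (f : ℕ → ℕ) : Set ℕ := {i | Odd i ∧ 1 ≤ mult f i}

/-- the set `{i_1 > … > i_m}` of terms with odd multiplicity -/
def OddSet (f : ℕ → ℕ) : Set ℕ := {i | Odd (mult f i)}

/-- for special symplectic partitions: `{i_1 > … > i_{m'}}`, with `0` added if `m` is odd -/
def Dsymp (f : ℕ → ℕ) : Set ℕ :=
  {i | Odd (mult f i) ∨ (i = 0 ∧ Odd (OddSet f).ncard)}

/-- `a = i_{2h-1}` and `b = i_{2h}` for some `h`: consecutive elements of `Dsymp f`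
with an even number of elements of `Dsymp f` above `a`. -/
def PairedS (f : ℕ → ℕ) (a b : ℕ) : Prop :=
  b < a ∧ a ∈ Dsymp f ∧ b ∈ Dsymp f ∧ Even ((Dsymp f ∩ Set.Ioi a).ncard) ∧
    Dsymp f ∩ Set.Ioo b a = ∅

/-- intervals of a special symplectic partition of `2n` -/
def IsIntervalS (f : ℕ → ℕ) (Δ : Set ℕ) : Prop :=
  (∃ a b, PairedS f a b ∧ Δ = {i | (i = 0 ∨ 1 ≤ mult f i) ∧ b ≤ i ∧ i ≤ a}) ∨
  (∃ i, Even i ∧ (i = 0 ∨ (2 ≤ i ∧ 1 ≤ mult f i)) ∧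
    (¬ ∃ a b, PairedS f a b ∧ b ≤ i ∧ i ≤ a) ∧ Δ = {i})

/-- `a = i_{2h-1}` and `b = i_{2h}` for some `h` (orthogonal partitions of `2n`) -/
def PairedOE (f : ℕ → ℕ) (a b : ℕ) : Prop :=
  b < a ∧ a ∈ OddSet f ∧ b ∈ OddSet f ∧ Even ((OddSet f ∩ Set.Ioi a).ncard) ∧
    OddSet f ∩ Set.Ioo b a = ∅

/-- intervals of a special orthogonal partition of `2n` -/
def IsIntervalOE (f : ℕ → ℕ) (Δ : Set ℕ) : Prop :=
  (∃ a b, PairedOE f a b ∧ Δ = {i | 1 ≤ mult f i ∧ b ≤ i ∧ i ≤ a}) ∨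
  (∃ i, Odd i ∧ 1 ≤ mult f i ∧ (¬ ∃ a b, PairedOE f a b ∧ b ≤ i ∧ i ≤ a) ∧ Δ = {i})

/-- `a = i_{2h}` and `b = i_{2h+1}` for some `h ≥ 1` (orthogonal partitions of `2n+1`) -/
def PairedOO (f : ℕ → ℕ) (a b : ℕ) : Prop :=
  b < a ∧ a ∈ OddSet f ∧ b ∈ OddSet f ∧ Odd ((OddSet f ∩ Set.Ioi a).ncard) ∧
    OddSet f ∩ Set.Ioo b a = ∅

/-- intervals of a special orthogonal partition of `2n+1` (convention `i_0 = ∞`) -/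
def IsIntervalOO (f : ℕ → ℕ) (Δ : Set ℕ) : Prop :=
  (∃ b, b ∈ OddSet f ∧ OddSet f ∩ Set.Ioi b = ∅ ∧ Δ = {i | 1 ≤ mult f i ∧ b ≤ i}) ∨
  (∃ a b, PairedOO f a b ∧ Δ = {i | 1 ≤ mult f i ∧ b ≤ i ∧ i ≤ a}) ∨
  (∃ i, Odd i ∧ 1 ≤ mult f i ∧
    (¬ ((∃ b, b ∈ OddSet f ∧ OddSet f ∩ Set.Ioi b = ∅ ∧ b ≤ i) ∨
        (∃ a b, PairedOO f a b ∧ b ≤ i ∧ i ≤ a))) ∧ Δ = {i})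

/-- `J(Δ) = {j ≥ 1 : λ_j ∈ Δ}` -/
def Jset (f : ℕ → ℕ) (Δ : Set ℕ) : Set ℕ := {j | 1 ≤ j ∧ f j ∈ Δ}

/-- `ζ(λ)` for a special symplectic partition (`j_max(Δ_min) = ∞`, so the smallest
interval contributes no `-1`: its `J`-set has no greatest element). -/
noncomputable def zetaS (f : ℕ → ℕ) : ℕ → ℤ := fun j =>
  if ∃ Δ, IsIntervalS f Δ ∧ IsLeast (Jset f Δ) j then 1
  else if ∃ Δ, IsIntervalS f Δ ∧ IsGreatest (Jset f Δ) j then -1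
  else 0

/-- `ζ(λ)` for a special orthogonal partition of `2n` -/
noncomputable def zetaOE (f : ℕ → ℕ) : ℕ → ℤ := fun j =>
  if ∃ Δ, IsIntervalOE f Δ ∧ IsLeast (Jset f Δ) j then 1
  else if ∃ Δ, IsIntervalOE f Δ ∧ IsGreatest (Jset f Δ) j then -1
  else 0

/-- `J^+` for `λ1` special symplectic and `λ2` special orthogonal (of `2n2`) -/
def JplusSet (f1 f2 : ℕ → ℕ) : Set ℕ :=
  {j | 1 ≤ j ∧ Even (f1 j) ∧ Odd (f2 j) ∧
    ((∃ Δ, IsIntervalS f1 Δ ∧ IsLeast (Jset f1 Δ) j) ∨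
     (∃ Δ, IsIntervalOE f2 Δ ∧ IsLeast (Jset f2 Δ) j))}

/-- `J^-` -/
def JminusSet (f1 f2 : ℕ → ℕ) : Set ℕ :=
  {j | 1 ≤ j ∧ Even (f1 j) ∧ Odd (f2 j) ∧
    ((∃ Δ, IsIntervalS f1 Δ ∧ IsGreatest (Jset f1 Δ) j) ∨
     (∃ Δ, IsIntervalOE f2 Δ ∧ IsGreatest (Jset f2 Δ) j))}

/-- the sequence `ξ` -/
noncomputable def xi (f1 f2 : ℕ → ℕ) : ℕ → ℤ := fun j =>
  if j ∈ JplusSet f1 f2 then 1 else if j ∈ JminusSet f1 f2 then -1 else 0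

/-- partial sums of an integer-valued sequence indexed from 1 -/
def Sz (f : ℕ → ℤ) (k : ℕ) : ℤ := ∑ j ∈ Finset.Icc 1 k, f j

/-- `g` is the greatest orthogonal partition of `N` which is dominated by the
sequence `t` (used to define the Spaltenstein-type duality `d`). -/
def IsDualOf (g : ℕ → ℕ) (N : ℕ) (t : ℕ → ℕ) : Prop :=
  (IsPartition g N ∧ Orth g ∧ Dom g t) ∧
  ∀ ν, IsPartition ν N → Orth ν → Dom ν t → Dom ν g

/-- `g = d(f)` for `f` a symplectic partition of `2m`: the greatest orthogonal
partition of `2m+1` dominated by `^t(f ∪ (1))`. -/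
def IsSympDual (g : ℕ → ℕ) (m : ℕ) (f : ℕ → ℕ) : Prop :=
  IsDualOf g (2*m+1) (transpose (unionP f one1))

/-- `g = d(f)` for `f` an orthogonal partition of `2m`: the greatest orthogonal
partition of `2m` dominated by `^tf`. -/
def IsOrthDual (g : ℕ → ℕ) (m : ℕ) (f : ℕ → ℕ) : Prop :=
  IsDualOf g (2*m) (transpose f)

structure IsFinNonincreasing (f : ℕ → ℕ) : Prop where
  mono : ∀ ⦃j k : ℕ⦄, 1 ≤ j → j ≤ k → f k ≤ f j
  fin : ∃ m, ∀ j, m < j → f j = 0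

theorem IsPartition.isFinNonincreasing {f : ℕ → ℕ} {N : ℕ} (h : IsPartition f N) :
    IsFinNonincreasing f :=
  ⟨h.mono, h.fin⟩

def RunStart (f : ℕ → ℕ) (j : ℕ) : Prop := j = 1 ∨ f (j - 1) ≠ f j

def RunEnd (f : ℕ → ℕ) (j : ℕ) : Prop := f (j + 1) ≠ f j

section Runs

variable {f : ℕ → ℕ}

lemma runStart_iff_of_setOf_eq_Icc {v x y k : ℕ} (h : {k | 1 ≤ k ∧ f k = v} = Set.Icc x y)
    (hk : k ∈ Set.Icc x y) : RunStart f k ↔ k = x := by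
  have hmem : ∀ {i}, i ∈ Set.Icc x y → 1 ≤ i ∧ f i = v := fun hi => by rwa [← h] at hi
  obtain ⟨hxk, hky⟩ := id hk
  have hx := (hmem ⟨le_rfl, hxk.trans hky⟩).1
  constructor
  · rintro (rfl | hne)
    · omega
    · by_contra hkx
      exact hne (by rw [(hmem ⟨by omega, by omega⟩).2, (hmem hk).2])
  · rintro rfl
    refine or_iff_not_imp_left.mpr fun hk1 heq => ?_
    have : k - 1 ∈ {k | 1 ≤ k ∧ f k = v} := ⟨by omega, heq ▸ (hmem hk).2⟩
    rw [h] at this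
    exact absurd this.1 (by omega)

lemma runEnd_iff_of_setOf_eq_Icc {v x y k : ℕ} (h : {k | 1 ≤ k ∧ f k = v} = Set.Icc x y)
    (hk : k ∈ Set.Icc x y) : RunEnd f k ↔ k = y := by
  have hmem : ∀ {i}, i ∈ Set.Icc x y → 1 ≤ i ∧ f i = v := fun hi => by rwa [← h] at hi
  obtain ⟨hxk, hky⟩ := id hk
  constructor
  · intro hne
    by_contra hky
    exact hne (by rw [(hmem ⟨by omega, by omega⟩).2, (hmem hk).2])
  · rintro rfl heq
    have : k + 1 ∈ {k | 1 ≤ k ∧ f k = v} := ⟨by omega, heq ▸ (hmem hk).2⟩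
    rw [h] at this
    exact absurd this.2 (by omega)

lemma mult_eq_of_setOf_eq_Icc {v x y : ℕ} (h : {k | 1 ≤ k ∧ f k = v} = Set.Icc x y) :
    mult f v = y + 1 - x := by
  rw [mult, h, Set.ncard_Icc_nat]

namespace IsFinNonincreasing

lemma mult_zero (hf : IsFinNonincreasing f) : mult f 0 = 0 := by
  obtain ⟨M, hM⟩ := hf.fin
  refine Set.Infinite.ncard ((Set.Ioi_infinite M).mono fun j hj => ?_)
  exact ⟨by simp only [Set.mem_Ioi] at hj; omega, hM j hj⟩

lemma finite_setOf_eq (hf : IsFinNonincreasing f) {v : ℕ} (hv : 1 ≤ v) :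
    {k | 1 ≤ k ∧ f k = v}.Finite := by
  obtain ⟨M, hM⟩ := hf.fin
  refine (Set.finite_Iic M).subset fun k ⟨_, hk⟩ => ?_
  by_contra hkM
  have := hM k (by simpa using hkM)
  omega

lemma apply_lt_of_runStart (hf : IsFinNonincreasing f) {j k : ℕ} (hs : RunStart f j)
    (hk : 1 ≤ k) (hkj : k < j) : f j < f k :=
  have := hf.mono (by omega : 1 ≤ j - 1) (by omega : j - 1 ≤ j)
  have := hf.mono hk (by omega : k ≤ j - 1)
  by rcases hs with h | h <;> omega

lemma apply_lt_of_runEnd (hf : IsFinNonincreasing f) {j k : ℕ} (he : RunEnd f j)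
    (hj : 1 ≤ j) (hjk : j < k) : f k < f j :=
  have := hf.mono hj (by omega : j ≤ j + 1)
  have := hf.mono (by omega : 1 ≤ j + 1) (by omega : j + 1 ≤ k)
  by unfold RunEnd at he; omega

lemma exists_setOf_eq_Icc (hf : IsFinNonincreasing f) {j : ℕ} (hj : 1 ≤ j) (hv : 1 ≤ f j) :
    ∃ x y, x ≤ j ∧ j ≤ y ∧ {k | 1 ≤ k ∧ f k = f j} = Set.Icc x y := by
  set s := {k | 1 ≤ k ∧ f k = f j}
  have hfin : s.Finite := hf.finite_setOf_eq hv
  have hjs : j ∈ s := ⟨hj, rfl⟩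
  refine ⟨sInf s, sSup s, Nat.sInf_le hjs, le_csSup hfin.bddAbove hjs, ?_⟩
  have hx : sInf s ∈ s := Nat.sInf_mem ⟨j, hjs⟩
  have hy : sSup s ∈ s := Nat.sSup_mem ⟨j, hjs⟩ hfin.bddAbove
  ext k
  refine ⟨fun hk => ⟨Nat.sInf_le hk, le_csSup hfin.bddAbove hk⟩, fun ⟨hxk, hky⟩ => ?_⟩
  have := hf.mono hx.1 hxk
  have := hf.mono (hx.1.trans hxk) hky
  have := hx.2
  have := hy.2
  exact ⟨hx.1.trans hxk, by omega⟩

end IsFinNonincreasing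

end Runs

section Counting

variable {f : ℕ → ℕ}

lemma mult_eq_card {M : ℕ} (hM : ∀ j, M < j → f j = 0) {i : ℕ} (hi : 1 ≤ i) :
    mult f i = ((Finset.Icc 1 M).filter (fun k => f k = i)).card := by
  rw [mult, ← Set.ncard_coe_finset]
  congr 1
  ext k
  simp only [Set.mem_ofPred_eq, Finset.coe_filter, Finset.mem_Icc]
  refine ⟨fun ⟨hk, hfk⟩ => ⟨⟨hk, ?_⟩, hfk⟩, fun ⟨⟨hk, _⟩, hfk⟩ => ⟨hk, hfk⟩⟩
  by_contra hkM
  have := hM k (by omega)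
  omega

lemma exists_apply_eq_of_mem_oddSet {i : ℕ} (hi : i ∈ OddSet f) : ∃ k, 1 ≤ k ∧ f k = i :=
  Set.nonempty_of_ncard_ne_zero fun h => Nat.not_odd_zero (h ▸ hi : Odd 0)

lemma even_of_mem_oddSet (hs : Symp f) {i : ℕ} (hi : i ∈ OddSet f) : Even i := by
  by_contra h
  exact Nat.not_even_iff_odd.mpr hi (hs i (Nat.not_even_iff_odd.mp h))

namespace IsFinNonincreasing

lemma zero_notMem_oddSet (hf : IsFinNonincreasing f) : 0 ∉ OddSet f := by
  simp [OddSet, hf.mult_zero]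

lemma oddSet_finite (hf : IsFinNonincreasing f) : (OddSet f).Finite :=
  (Set.finite_Iic (f 1)).subset fun i hi => by
    obtain ⟨k, hk, rfl⟩ := exists_apply_eq_of_mem_oddSet hi
    exact hf.mono le_rfl hk

lemma odd_of_mem_oddSet (hf : IsFinNonincreasing f) (ho : Orth f) {i : ℕ} (hi : i ∈ OddSet f) :
    Odd i := by
  by_contra h
  have hi0 : i ≠ 0 := fun h0 => hf.zero_notMem_oddSet (h0 ▸ hi)
  exact Nat.not_even_iff_odd.mpr hi (ho i (Nat.not_odd_iff_even.mp h) (by omega))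

/-- Counting the parts of `f` with a property `Q` by value: the count is `∑_{Q i} mult f i`,
whose parity is that of the number of `i` with `Q i` and `mult f i` odd. -/
lemma even_card_filter_iff (hf : IsFinNonincreasing f) {M : ℕ} (hM : ∀ j, M < j → f j = 0)
    (Q : ℕ → Prop) [DecidablePred Q] (hQ : ¬ Q 0) :
    Even ((Finset.Icc 1 M).filter (fun k => Q (f k))).card ↔
      Even (OddSet f ∩ {i | Q i}).ncard := by
  have hsum : ((Finset.Icc 1 M).filter (fun k => Q (f k))).card =
      ∑ i ∈ (Finset.Icc 1 (f 1)).filter Q, mult f i := by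
    rw [Finset.card_eq_sum_card_fiberwise (f := f) (t := (Finset.Icc 1 (f 1)).filter Q)]
    · refine Finset.sum_congr rfl fun i hi => ?_
      simp only [Finset.mem_filter, Finset.mem_Icc] at hi
      rw [mult_eq_card hM hi.1.1, Finset.filter_filter]
      congr 1
      exact Finset.filter_congr fun k _ => ⟨And.right, fun h => ⟨h ▸ hi.2, h⟩⟩
    · intro k hk
      simp only [Finset.coe_filter, Finset.mem_Icc, Set.mem_ofPred_eq] at hk ⊢
      refine ⟨⟨Nat.pos_of_ne_zero fun h => hQ (h ▸ hk.2), hf.mono le_rfl hk.1.1⟩, hk.2⟩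
  rw [hsum, Finset.even_sum_iff_even_card_odd, ← Set.ncard_coe_finset]
  suffices h : (↑({i ∈ (Finset.Icc 1 (f 1)).filter Q | Odd (mult f i)}) : Set ℕ) =
      OddSet f ∩ {i | Q i} by rw [h]
  ext i
  simp only [Finset.coe_filter, Finset.mem_filter, Finset.mem_Icc, Set.mem_ofPred_eq,
    Set.mem_inter_iff, OddSet]
  refine ⟨fun ⟨⟨_, hQi⟩, hi⟩ => ⟨hi, hQi⟩, fun ⟨hi, hQi⟩ => ⟨⟨⟨?_, ?_⟩, hQi⟩, hi⟩⟩
  · exact Nat.pos_of_ne_zero fun h => hQ (h ▸ hQi)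
  · obtain ⟨k, hk, rfl⟩ := exists_apply_eq_of_mem_oddSet (f := f) hi
    exact hf.mono le_rfl hk

lemma odd_iff_of_runStart (hf : IsFinNonincreasing f) {j : ℕ} (hj : 1 ≤ j)
    (hs : RunStart f j) : Odd j ↔ Even (OddSet f ∩ Set.Ioi (f j)).ncard := by
  obtain ⟨M, hM⟩ := hf.fin
  have hIcc : (Finset.Icc 1 M).filter (fun k => f j < f k) = Finset.Icc 1 (j - 1) := by
    ext k
    simp only [Finset.mem_filter, Finset.mem_Icc]
    refine ⟨fun ⟨⟨hk, _⟩, hlt⟩ => ⟨hk, ?_⟩, fun ⟨hk, hkj⟩ => ?_⟩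
    · by_contra hjk
      have := hf.mono hj (by omega : j ≤ k)
      omega
    · have hlt := hf.apply_lt_of_runStart hs hk (by omega)
      refine ⟨⟨hk, ?_⟩, hlt⟩
      by_contra hkM
      have := hM k (by omega)
      omega
  have := hf.even_card_filter_iff hM (f j < ·) (by omega)
  rw [hIcc, Nat.card_Icc] at this
  rw [← Set.Ioi_def, ← this, Nat.odd_iff, Nat.even_iff]
  omega

lemma even_iff_of_runEnd (hf : IsFinNonincreasing f) {j : ℕ} (hj : 1 ≤ j)
    (he : RunEnd f j) : Even j ↔ Even (OddSet f ∩ Set.Ici (f j)).ncard := by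
  obtain ⟨M, hM⟩ := hf.fin
  have hpos : f (j + 1) < f j := hf.apply_lt_of_runEnd he hj (Nat.lt_succ_self j)
  have hIcc : (Finset.Icc 1 M).filter (fun k => f j ≤ f k) = Finset.Icc 1 j := by
    ext k
    simp only [Finset.mem_filter, Finset.mem_Icc]
    refine ⟨fun ⟨⟨hk, _⟩, hle⟩ => ⟨hk, ?_⟩, fun ⟨hk, hkj⟩ => ⟨⟨hk, ?_⟩, hf.mono hk hkj⟩⟩
    · by_contra hjk
      have := hf.apply_lt_of_runEnd he hj (by omega : j < k)
      omega
    · by_contra hkM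
      have := hM j (by omega)
      omega
  have := hf.even_card_filter_iff hM (f j ≤ ·) (by omega)
  rwa [hIcc, Nat.card_Icc, Nat.add_sub_cancel] at this

end IsFinNonincreasing

lemma IsPartition.even_ncard_oddSet {n : ℕ} (hf : IsPartition f (2 * n)) (ho : Orth f) :
    Even (OddSet f).ncard := by
  obtain ⟨M, hM⟩ := hf.fin
  have hsum : Even (∑ k ∈ Finset.Icc 1 M, f k) := ⟨n, by rw [← S, hf.total M hM]; ring⟩
  rw [Finset.even_sum_iff_even_card_odd,
    hf.isFinNonincreasing.even_card_filter_iff hM Odd Nat.not_odd_zero] at hsum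
  have hodd : OddSet f ⊆ {i | Odd i} := fun _ hi => hf.isFinNonincreasing.odd_of_mem_oddSet ho hi
  rwa [Set.inter_eq_left.mpr hodd] at hsum

end Counting

/-- In the decreasing enumeration `i_1 > i_2 > …` of `D`, `(a, b) = (i_{2h-1}, i_{2h})`. -/
def Paired (D : Set ℕ) (a b : ℕ) : Prop :=
  b < a ∧ a ∈ D ∧ b ∈ D ∧ Even (D ∩ Set.Ioi a).ncard ∧ D ∩ Set.Ioo b a = ∅

section Pairing

variable {D : Set ℕ}

lemma ncard_eq_ncard_Iio_add_ncard_Ioi (hD : D.Finite) {a : ℕ} (ha : a ∈ D) :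
    D.ncard = (D ∩ Set.Iio a).ncard + 1 + (D ∩ Set.Ioi a).ncard := by
  have hsplit : D = (D ∩ Set.Iio a) ∪ insert a (D ∩ Set.Ioi a) := by
    ext x
    simp only [Set.mem_union, Set.mem_inter_iff, Set.mem_insert_iff, Set.mem_Iio, Set.mem_Ioi]
    constructor
    · intro hx
      rcases lt_trichotomy x a with h | rfl | h <;> simp [*]
    · rintro (⟨hx, _⟩ | rfl | ⟨hx, _⟩) <;> assumption
  have hdisj : Disjoint (D ∩ Set.Iio a) (insert a (D ∩ Set.Ioi a)) := by
    refine Set.disjoint_left.mpr fun x ⟨_, hxa⟩ hx => ?_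
    simp only [Set.mem_Iio] at hxa
    rcases hx with rfl | ⟨_, hx⟩
    · exact lt_irrefl _ hxa
    · exact lt_asymm hxa hx
  conv_lhs => rw [hsplit]
  rw [Set.ncard_union_eq hdisj (hD.subset Set.inter_subset_left)
    ((hD.subset Set.inter_subset_left).insert a),
    Set.ncard_insert_of_notMem (s := D ∩ Set.Ioi a) (by simp) (hD.subset Set.inter_subset_left)]
  ring

lemma ncard_inter_Ioi_eq (hD : D.Finite) {w a : ℕ} (hwa : w < a) (ha : a ∈ D) :
    (D ∩ Set.Ioi w).ncard = (D ∩ Set.Ioo w a).ncard + 1 + (D ∩ Set.Ioi a).ncard := by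
  rw [ncard_eq_ncard_Iio_add_ncard_Ioi (hD.subset Set.inter_subset_left)
    (show a ∈ D ∩ Set.Ioi w from ⟨ha, hwa⟩),
    Set.inter_assoc, Set.Ioi_inter_Iio, Set.inter_assoc,
    Set.Ioi_inter_Ioi, sup_eq_right.mpr hwa.le]

lemma ncard_inter_Ici_of_mem (hD : D.Finite) {b : ℕ} (hb : b ∈ D) :
    (D ∩ Set.Ici b).ncard = (D ∩ Set.Ioi b).ncard + 1 := by
  rw [← Set.Ioi_insert, Set.inter_insert_of_mem hb,
    Set.ncard_insert_of_notMem (s := D ∩ Set.Ioi b) (by simp) (hD.subset Set.inter_subset_left)]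

lemma inter_Ici_of_notMem {b : ℕ} (hb : b ∉ D) : D ∩ Set.Ici b = D ∩ Set.Ioi b := by
  rw [← Set.Ioi_insert, Set.inter_insert_of_notMem hb]

lemma exists_next_mem (hD : D.Finite) {w : ℕ} (h : (D ∩ Set.Ioi w).Nonempty) :
    ∃ a ∈ D, w < a ∧ D ∩ Set.Ioo w a = ∅ ∧
      (D ∩ Set.Ioi w).ncard = (D ∩ Set.Ioi a).ncard + 1 := by
  obtain ⟨haD, hwa⟩ : sInf (D ∩ Set.Ioi w) ∈ D ∩ Set.Ioi w := Nat.sInf_mem h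
  have hempty : D ∩ Set.Ioo w (sInf (D ∩ Set.Ioi w)) = ∅ :=
    Set.eq_empty_of_forall_notMem fun x ⟨hx, hwx, hxa⟩ =>
      absurd (Nat.sInf_le (show x ∈ D ∩ Set.Ioi w from ⟨hx, hwx⟩)) (not_le.mpr hxa)
  refine ⟨_, haD, hwa, hempty, ?_⟩
  rw [ncard_inter_Ioi_eq hD hwa haD, hempty, Set.ncard_empty]
  ring

lemma exists_paired_of_even (hD : D.Finite) (hE : Even D.ncard) {a : ℕ} (ha : a ∈ D)
    (h : Even (D ∩ Set.Ioi a).ncard) : ∃ b, Paired D a b := by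
  have hbelow : (D ∩ Set.Iio a).Nonempty := by
    refine Set.nonempty_of_ncard_ne_zero fun h0 => ?_
    rw [ncard_eq_ncard_Iio_add_ncard_Ioi hD ha, h0, zero_add, add_comm] at hE
    exact Nat.not_even_iff_odd.mpr h.add_one hE
  have hbdd : BddAbove (D ∩ Set.Iio a) := (hD.subset Set.inter_subset_left).bddAbove
  obtain ⟨hbD, hba⟩ : sSup (D ∩ Set.Iio a) ∈ D ∩ Set.Iio a := Nat.sSup_mem hbelow hbdd
  refine ⟨_, hba, ha, hbD, h, Set.eq_empty_of_forall_notMem fun x ⟨hx, hbx, hxa⟩ => ?_⟩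
  exact absurd (le_csSup hbdd (show x ∈ D ∩ Set.Iio a from ⟨hx, hxa⟩)) (not_le.mpr hbx)

lemma Paired.odd_ncard_inter_Ioi_right (hD : D.Finite) {a b : ℕ} (h : Paired D a b) :
    Odd (D ∩ Set.Ioi b).ncard := by
  obtain ⟨hba, ha, -, hE, hempty⟩ := h
  rw [ncard_inter_Ioi_eq hD hba ha, hempty, Set.ncard_empty, zero_add, add_comm]
  exact hE.add_one

lemma exists_paired_of_odd (hD : D.Finite) {b : ℕ} (hb : b ∈ D)
    (h : Odd (D ∩ Set.Ioi b).ncard) : ∃ a, Paired D a b := by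
  obtain ⟨a, ha, hba, hempty, hcard⟩ :=
    exists_next_mem hD (Set.nonempty_of_ncard_ne_zero h.pos.ne')
  refine ⟨a, hba, ha, hb, ?_, hempty⟩
  rw [hcard] at h
  exact Nat.not_odd_iff_even.mp (Nat.odd_add_one.mp h)

lemma exists_paired_le_ge_of_mem (hD : D.Finite) (hE : Even D.ncard) {i : ℕ} (hi : i ∈ D) :
    ∃ a b, Paired D a b ∧ b ≤ i ∧ i ≤ a := by
  rcases Nat.even_or_odd (D ∩ Set.Ioi i).ncard with h | h
  · obtain ⟨b, hb⟩ := exists_paired_of_even hD hE hi h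
    exact ⟨i, b, hb, hb.1.le, le_rfl⟩
  · obtain ⟨a, ha⟩ := exists_paired_of_odd hD hi h
    exact ⟨a, i, ha, le_rfl, ha.1.le⟩

lemma exists_paired_le_ge_iff_of_notMem (hD : D.Finite) (hE : Even D.ncard) {i : ℕ}
    (hi : i ∉ D) : (∃ a b, Paired D a b ∧ b ≤ i ∧ i ≤ a) ↔ Odd (D ∩ Set.Ioi i).ncard := by
  constructor
  · rintro ⟨a, b, ⟨hba, ha, hb, hEa, hempty⟩, hbi, hia⟩
    have hia' : i < a := lt_of_le_of_ne hia fun h => hi (h ▸ ha)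
    have hempty' : D ∩ Set.Ioo i a = ∅ := Set.subset_eq_empty
      (Set.inter_subset_inter_right D (Set.Ioo_subset_Ioo_left hbi)) hempty
    rw [ncard_inter_Ioi_eq hD hia' ha, hempty', Set.ncard_empty, zero_add, add_comm]
    exact hEa.add_one
  · intro h
    obtain ⟨a, ha, hia, hempty, hcard⟩ :=
      exists_next_mem hD (Set.nonempty_of_ncard_ne_zero h.pos.ne')
    rw [hcard] at h
    obtain ⟨b, hb⟩ :=
      exists_paired_of_even hD hE ha (Nat.not_odd_iff_even.mp (Nat.odd_add_one.mp h))
    refine ⟨a, b, hb, not_lt.mp fun hib => ?_, hia.le⟩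
    have : b ∈ D ∩ Set.Ioo i a := ⟨hb.2.2.1, hib, hb.1⟩
    rwa [hempty] at this

variable (D) in
/-- `v` is the largest value of its interval. -/
def IsTop (v : ℕ) : Prop :=
  (v ∈ D ∧ ∃ b, Paired D v b) ∨ (v ∉ D ∧ ¬ ∃ a b, Paired D a b ∧ b ≤ v ∧ v ≤ a)

variable (D) in
/-- `v` is the smallest value of its interval. -/
def IsBottom (v : ℕ) : Prop :=
  (v ∈ D ∧ ∃ a, Paired D a v) ∨ (v ∉ D ∧ ¬ ∃ a b, Paired D a b ∧ b ≤ v ∧ v ≤ a)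

lemma isTop_iff (hD : D.Finite) (hE : Even D.ncard) {v : ℕ} :
    IsTop D v ↔ Even (D ∩ Set.Ioi v).ncard := by
  by_cases hv : v ∈ D
  · simp only [IsTop, hv, true_and, not_true_eq_false, false_and, or_false]
    exact ⟨fun ⟨b, hb⟩ => hb.2.2.2.1, exists_paired_of_even hD hE hv⟩
  · simp only [IsTop, hv, false_and, not_false_eq_true, true_and, false_or,
      exists_paired_le_ge_iff_of_notMem hD hE hv, Nat.not_odd_iff_even]

lemma isBottom_iff (hD : D.Finite) (hE : Even D.ncard) {v : ℕ} :
    IsBottom D v ↔ Even (D ∩ Set.Ici v).ncard := by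
  by_cases hv : v ∈ D
  · simp only [IsBottom, hv, true_and, not_true_eq_false, false_and, or_false,
      ncard_inter_Ici_of_mem hD hv, Nat.even_add_one, Nat.not_even_iff_odd]
    exact ⟨fun ⟨a, ha⟩ => ha.odd_ncard_inter_Ioi_right hD, exists_paired_of_odd hD hv⟩
  · simp only [IsBottom, hv, false_and, not_false_eq_true, true_and, false_or,
      exists_paired_le_ge_iff_of_notMem hD hE hv, Nat.not_odd_iff_even, inter_Ici_of_notMem hv]

end Pairing

section Intervals

variable {f : ℕ → ℕ}

namespace IsFinNonincreasing

lemma one_le_mult_apply (hf : IsFinNonincreasing f) {j : ℕ} (hj : 1 ≤ j) (hv : 1 ≤ f j) :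
    1 ≤ mult f (f j) :=
  (Set.ncard_pos (hf.finite_setOf_eq hv)).mpr ⟨j, hj, rfl⟩

lemma isLeast_Jset_iff (hf : IsFinNonincreasing f) {Δ : Set ℕ} {a j : ℕ} (hΔ : IsGreatest Δ a)
    (ha : ∃ k, 1 ≤ k ∧ f k = a) (hj : 1 ≤ j) :
    IsLeast (Jset f Δ) j ↔ f j = a ∧ RunStart f j := by
  constructor
  · rintro ⟨⟨-, hjΔ⟩, hlb⟩
    obtain ⟨k, hk, hka⟩ := ha
    have hfj : f j = a := le_antisymm (hΔ.2 hjΔ)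
      (hka ▸ hf.mono hj (hlb ⟨hk, hka ▸ hΔ.1⟩))
    refine ⟨hfj, or_iff_not_imp_left.mpr fun hj1 heq => ?_⟩
    have := hlb (⟨by omega, heq ▸ hjΔ⟩ : j - 1 ∈ Jset f Δ)
    omega
  · rintro ⟨hfj, hrun⟩
    refine ⟨⟨hj, hfj ▸ hΔ.1⟩, fun k ⟨hk, hkΔ⟩ => not_lt.mp fun hkj => ?_⟩
    have := hf.apply_lt_of_runStart hrun hk hkj
    have := hΔ.2 hkΔ
    omega

lemma isGreatest_Jset_iff (hf : IsFinNonincreasing f) {Δ : Set ℕ} {b j : ℕ} (hΔ : IsLeast Δ b)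
    (hb : ∃ k, 1 ≤ k ∧ f k = b) (hj : 1 ≤ j) :
    IsGreatest (Jset f Δ) j ↔ f j = b ∧ RunEnd f j := by
  constructor
  · rintro ⟨⟨-, hjΔ⟩, hub⟩
    obtain ⟨k, hk, hkb⟩ := hb
    have hfj : f j = b := le_antisymm (hkb ▸ hf.mono hk (hub ⟨hk, hkb ▸ hΔ.1⟩)) (hΔ.2 hjΔ)
    refine ⟨hfj, fun heq => ?_⟩
    have := hub (⟨by omega, heq ▸ hjΔ⟩ : j + 1 ∈ Jset f Δ)
    omega
  · rintro ⟨hfj, hrun⟩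
    refine ⟨⟨hj, hfj ▸ hΔ.1⟩, fun k ⟨_, hkΔ⟩ => not_lt.mp fun hjk => ?_⟩
    have := hf.apply_lt_of_runEnd hrun hj hjk
    have := hΔ.2 hkΔ
    omega

lemma not_isGreatest_Jset_of_zero_mem (hf : IsFinNonincreasing f) {Δ : Set ℕ} (h0 : 0 ∈ Δ)
    (j : ℕ) : ¬ IsGreatest (Jset f Δ) j := fun h => by
  obtain ⟨M, hM⟩ := hf.fin
  have := h.2 (⟨by omega, (hM (M + j + 1) (by omega)).symm ▸ h0⟩ : M + j + 1 ∈ Jset f Δ)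
  omega

end IsFinNonincreasing

lemma mem_oddSet_of_mem_dsymp {i : ℕ} (h : i ∈ Dsymp f) (hi : i ≠ 0) : i ∈ OddSet f :=
  h.resolve_right fun h' => hi h'.1

lemma dsymp_inter_Ioi (w : ℕ) : Dsymp f ∩ Set.Ioi w = OddSet f ∩ Set.Ioi w := by
  ext i
  exact ⟨fun ⟨h, hw⟩ => ⟨mem_oddSet_of_mem_dsymp h (by simp at hw; omega), hw⟩,
    fun ⟨h, hw⟩ => ⟨Or.inl h, hw⟩⟩

lemma dsymp_inter_Ici {w : ℕ} (hw : 1 ≤ w) : Dsymp f ∩ Set.Ici w = OddSet f ∩ Set.Ici w := by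
  ext i
  exact ⟨fun ⟨h, hi⟩ => ⟨mem_oddSet_of_mem_dsymp h (by simp at hi; omega), hi⟩,
    fun ⟨h, hi⟩ => ⟨Or.inl h, hi⟩⟩

namespace IsFinNonincreasing

lemma dsymp_finite (hf : IsFinNonincreasing f) : (Dsymp f).Finite :=
  (hf.oddSet_finite.insert 0).subset fun i hi => by
    rcases hi with h | ⟨rfl, -⟩
    · exact Or.inr h
    · exact Or.inl rfl

lemma even_ncard_dsymp (hf : IsFinNonincreasing f) : Even (Dsymp f).ncard := by
  by_cases hodd : Odd (OddSet f).ncard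
  · have : Dsymp f = insert 0 (OddSet f) := by
      ext i
      simp only [Dsymp, Set.mem_insert_iff, Set.mem_ofPred_eq]
      exact ⟨fun h => h.elim Or.inr fun h => Or.inl h.1,
        fun h => h.elim (fun h => Or.inr ⟨h, hodd⟩) Or.inl⟩
    rw [this, Set.ncard_insert_of_notMem hf.zero_notMem_oddSet hf.oddSet_finite]
    exact hodd.add_one
  · have : Dsymp f = OddSet f := by
      ext i
      exact ⟨fun h => h.elim id fun h => absurd h.2 hodd, Or.inl⟩
    rw [this]
    exact Nat.not_odd_iff_even.mp hodd

end IsFinNonincreasing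

end Intervals

section IntervalEnds

variable {f : ℕ → ℕ}

lemma isGreatest_setOf_le_le {P : ℕ → Prop} {a b : ℕ} (ha : P a) (hba : b ≤ a) :
    IsGreatest {i | P i ∧ b ≤ i ∧ i ≤ a} a :=
  ⟨⟨ha, hba, le_rfl⟩, fun _ h => h.2.2⟩

lemma isLeast_setOf_le_le {P : ℕ → Prop} {a b : ℕ} (hb : P b) (hba : b ≤ a) :
    IsLeast {i | P i ∧ b ≤ i ∧ i ≤ a} b :=
  ⟨⟨hb, le_rfl, hba⟩, fun _ h => h.2.1⟩

lemma one_le_mult_of_mem_oddSet {i : ℕ} (h : i ∈ OddSet f) : 1 ≤ mult f i := Odd.pos h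

namespace IsFinNonincreasing

theorem exists_isIntervalS_isLeast_iff (hf : IsFinNonincreasing f) (hs : Symp f) {j : ℕ}
    (hj : 1 ≤ j) :
    (∃ Δ, IsIntervalS f Δ ∧ IsLeast (Jset f Δ) j) ↔ Odd j ∧ Even (f j) ∧ RunStart f j := by
  have htop : ∀ {v}, IsTop (Dsymp f) v ↔ Even (OddSet f ∩ Set.Ioi v).ncard := by
    intro v
    rw [isTop_iff hf.dsymp_finite hf.even_ncard_dsymp, dsymp_inter_Ioi]
  constructor
  · rintro ⟨Δ, ⟨a, b, hab, rfl⟩ | ⟨i, hi, -, hcov, rfl⟩, hleast⟩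
    · have haO : a ∈ OddSet f := mem_oddSet_of_mem_dsymp hab.2.1 (by have := hab.1; omega)
      obtain ⟨hfj, hrun⟩ := (hf.isLeast_Jset_iff
        (isGreatest_setOf_le_le (Or.inr (one_le_mult_of_mem_oddSet haO)) hab.1.le)
        (exists_apply_eq_of_mem_oddSet haO) hj).mp hleast
      exact ⟨(hf.odd_iff_of_runStart hj hrun).mpr (hfj ▸ htop.mp (Or.inl ⟨hab.2.1, b, hab⟩)),
        hfj ▸ even_of_mem_oddSet hs haO, hrun⟩
    · have hfj : f j = i := hleast.1.2
      have hrun := ((hf.isLeast_Jset_iff isGreatest_singleton ⟨j, hj, hfj⟩ hj).mp hleast).2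
      have hiD : i ∉ Dsymp f := fun h =>
        hcov (exists_paired_le_ge_of_mem hf.dsymp_finite hf.even_ncard_dsymp h)
      exact ⟨(hf.odd_iff_of_runStart hj hrun).mpr (hfj ▸ htop.mp (Or.inr ⟨hiD, hcov⟩)),
        hfj ▸ hi, hrun⟩
  · rintro ⟨hjo, hfe, hrun⟩
    have hJ := fun Δ hΔ => (hf.isLeast_Jset_iff (Δ := Δ) hΔ ⟨j, hj, rfl⟩ hj).mpr ⟨rfl, hrun⟩
    rcases htop.mpr ((hf.odd_iff_of_runStart hj hrun).mp hjo) with ⟨-, b, hb⟩ | ⟨-, hcov⟩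
    · refine ⟨_, Or.inl ⟨f j, b, hb, rfl⟩, hJ _ (isGreatest_setOf_le_le (Or.inr ?_) hb.1.le)⟩
      exact hf.one_le_mult_apply hj (by have := hb.1; omega)
    · refine ⟨{f j}, Or.inr ⟨f j, hfe, ?_, hcov, rfl⟩, hJ _ isGreatest_singleton⟩
      rcases Nat.eq_zero_or_pos (f j) with h | h
      · exact Or.inl h
      · exact Or.inr ⟨by obtain ⟨t, ht⟩ := hfe; omega, hf.one_le_mult_apply hj h⟩

theorem exists_isIntervalS_isGreatest_iff (hf : IsFinNonincreasing f) (hs : Symp f) {j : ℕ}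
    (hj : 1 ≤ j) :
    (∃ Δ, IsIntervalS f Δ ∧ IsGreatest (Jset f Δ) j) ↔ Even j ∧ Even (f j) ∧ RunEnd f j := by
  have hbot : ∀ {v}, 1 ≤ v → (IsBottom (Dsymp f) v ↔ Even (OddSet f ∩ Set.Ici v).ncard) := by
    intro v hv
    rw [isBottom_iff hf.dsymp_finite hf.even_ncard_dsymp, dsymp_inter_Ici hv]
  constructor
  · rintro ⟨Δ, ⟨a, b, hab, rfl⟩ | ⟨i, hi, -, hcov, rfl⟩, hgr⟩
    · have hb0 : b ≠ 0 := by
        rintro rfl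
        exact hf.not_isGreatest_Jset_of_zero_mem (Δ := {i | (i = 0 ∨ 1 ≤ mult f i) ∧ 0 ≤ i ∧ i ≤ a})
          ⟨Or.inl rfl, le_rfl, Nat.zero_le a⟩ j hgr
      have hbO := mem_oddSet_of_mem_dsymp hab.2.2.1 hb0
      obtain ⟨hfj, hrun⟩ := (hf.isGreatest_Jset_iff
        (isLeast_setOf_le_le (Or.inr (one_le_mult_of_mem_oddSet hbO)) hab.1.le)
        (exists_apply_eq_of_mem_oddSet hbO) hj).mp hgr
      exact ⟨(hf.even_iff_of_runEnd hj hrun).mpr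
        (hfj ▸ (hbot (by omega)).mp (Or.inl ⟨hab.2.2.1, a, hab⟩)),
        hfj ▸ even_of_mem_oddSet hs hbO, hrun⟩
    · have hi0 : i ≠ 0 := by
        rintro rfl
        exact hf.not_isGreatest_Jset_of_zero_mem (Set.mem_singleton 0) j hgr
      have hfj : f j = i := hgr.1.2
      have hrun := ((hf.isGreatest_Jset_iff isLeast_singleton ⟨j, hj, hfj⟩ hj).mp hgr).2
      have hiD : i ∉ Dsymp f := fun h =>
        hcov (exists_paired_le_ge_of_mem hf.dsymp_finite hf.even_ncard_dsymp h)
      exact ⟨(hf.even_iff_of_runEnd hj hrun).mpr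
        (hfj ▸ (hbot (by omega)).mp (Or.inr ⟨hiD, hcov⟩)), hfj ▸ hi, hrun⟩
  · rintro ⟨hje, hfe, hrun⟩
    have hv : 1 ≤ f j := by
      have := hf.apply_lt_of_runEnd hrun hj (Nat.lt_succ_self j)
      omega
    have hJ := fun Δ hΔ => (hf.isGreatest_Jset_iff (Δ := Δ) hΔ ⟨j, hj, rfl⟩ hj).mpr ⟨rfl, hrun⟩
    rcases (hbot hv).mpr ((hf.even_iff_of_runEnd hj hrun).mp hje) with ⟨-, a, ha⟩ | ⟨-, hcov⟩
    · exact ⟨_, Or.inl ⟨a, f j, ha, rfl⟩,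
        hJ _ (isLeast_setOf_le_le (Or.inr (hf.one_le_mult_apply hj hv)) ha.1.le)⟩
    · refine ⟨{f j}, Or.inr ⟨f j, hfe, Or.inr ⟨?_, hf.one_le_mult_apply hj hv⟩, hcov, rfl⟩,
        hJ _ isLeast_singleton⟩
      obtain ⟨t, ht⟩ := hfe
      omega

theorem exists_isIntervalOE_isLeast_iff (hf : IsFinNonincreasing f) (ho : Orth f)
    (hE : Even (OddSet f).ncard) {j : ℕ} (hj : 1 ≤ j) :
    (∃ Δ, IsIntervalOE f Δ ∧ IsLeast (Jset f Δ) j) ↔ Odd j ∧ Odd (f j) ∧ RunStart f j := by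
  have htop : ∀ {v}, IsTop (OddSet f) v ↔ Even (OddSet f ∩ Set.Ioi v).ncard :=
    isTop_iff hf.oddSet_finite hE
  constructor
  · rintro ⟨Δ, ⟨a, b, hab, rfl⟩ | ⟨i, hi, -, hcov, rfl⟩, hleast⟩
    · obtain ⟨hfj, hrun⟩ := (hf.isLeast_Jset_iff
        (isGreatest_setOf_le_le (P := (1 ≤ mult f ·)) (one_le_mult_of_mem_oddSet hab.2.1) hab.1.le)
        (exists_apply_eq_of_mem_oddSet hab.2.1) hj).mp hleast
      exact ⟨(hf.odd_iff_of_runStart hj hrun).mpr (hfj ▸ htop.mp (Or.inl ⟨hab.2.1, b, hab⟩)),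
        hfj ▸ hf.odd_of_mem_oddSet ho hab.2.1, hrun⟩
    · have hfj : f j = i := hleast.1.2
      have hrun := ((hf.isLeast_Jset_iff isGreatest_singleton ⟨j, hj, hfj⟩ hj).mp hleast).2
      have hiD : i ∉ OddSet f := fun h =>
        hcov (exists_paired_le_ge_of_mem hf.oddSet_finite hE h)
      exact ⟨(hf.odd_iff_of_runStart hj hrun).mpr (hfj ▸ htop.mp (Or.inr ⟨hiD, hcov⟩)),
        hfj ▸ hi, hrun⟩
  · rintro ⟨hjo, hfo, hrun⟩
    have hJ := fun Δ hΔ => (hf.isLeast_Jset_iff (Δ := Δ) hΔ ⟨j, hj, rfl⟩ hj).mpr ⟨rfl, hrun⟩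
    have hm := hf.one_le_mult_apply hj hfo.pos
    rcases htop.mpr ((hf.odd_iff_of_runStart hj hrun).mp hjo) with ⟨-, b, hb⟩ | ⟨-, hcov⟩
    · exact ⟨_, Or.inl ⟨f j, b, hb, rfl⟩, hJ _ (isGreatest_setOf_le_le hm hb.1.le)⟩
    · exact ⟨{f j}, Or.inr ⟨f j, hfo, hm, hcov, rfl⟩, hJ _ isGreatest_singleton⟩

theorem exists_isIntervalOE_isGreatest_iff (hf : IsFinNonincreasing f) (ho : Orth f)
    (hE : Even (OddSet f).ncard) {j : ℕ} (hj : 1 ≤ j) :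
    (∃ Δ, IsIntervalOE f Δ ∧ IsGreatest (Jset f Δ) j) ↔ Even j ∧ Odd (f j) ∧ RunEnd f j := by
  have hbot : ∀ {v}, IsBottom (OddSet f) v ↔ Even (OddSet f ∩ Set.Ici v).ncard :=
    isBottom_iff hf.oddSet_finite hE
  constructor
  · rintro ⟨Δ, ⟨a, b, hab, rfl⟩ | ⟨i, hi, -, hcov, rfl⟩, hgr⟩
    · obtain ⟨hfj, hrun⟩ := (hf.isGreatest_Jset_iff
        (isLeast_setOf_le_le (P := (1 ≤ mult f ·)) (one_le_mult_of_mem_oddSet hab.2.2.1)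
          hab.1.le)
        (exists_apply_eq_of_mem_oddSet hab.2.2.1) hj).mp hgr
      exact ⟨(hf.even_iff_of_runEnd hj hrun).mpr (hfj ▸ hbot.mp (Or.inl ⟨hab.2.2.1, a, hab⟩)),
        hfj ▸ hf.odd_of_mem_oddSet ho hab.2.2.1, hrun⟩
    · have hfj : f j = i := hgr.1.2
      have hrun := ((hf.isGreatest_Jset_iff isLeast_singleton ⟨j, hj, hfj⟩ hj).mp hgr).2
      have hiD : i ∉ OddSet f := fun h =>
        hcov (exists_paired_le_ge_of_mem hf.oddSet_finite hE h)
      exact ⟨(hf.even_iff_of_runEnd hj hrun).mpr (hfj ▸ hbot.mp (Or.inr ⟨hiD, hcov⟩)),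
        hfj ▸ hi, hrun⟩
  · rintro ⟨hje, hfo, hrun⟩
    have hJ := fun Δ hΔ => (hf.isGreatest_Jset_iff (Δ := Δ) hΔ ⟨j, hj, rfl⟩ hj).mpr ⟨rfl, hrun⟩
    have hm := hf.one_le_mult_apply hj hfo.pos
    rcases hbot.mpr ((hf.even_iff_of_runEnd hj hrun).mp hje) with ⟨-, a, ha⟩ | ⟨-, hcov⟩
    · exact ⟨_, Or.inl ⟨a, f j, ha, rfl⟩, hJ _ (isLeast_setOf_le_le hm ha.1.le)⟩
    · exact ⟨{f j}, Or.inr ⟨f j, hfo, hm, hcov, rfl⟩, hJ _ isLeast_singleton⟩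

end IsFinNonincreasing

end IntervalEnds

section Alignment

variable {f : ℕ → ℕ}

lemma even_mult_of_symp (hs : Symp f) (i : ℕ) (hi : i % 2 = 1) : Even (mult f i) :=
  hs i (Nat.odd_iff.mpr hi)

namespace IsFinNonincreasing

lemma even_mult_of_orth (hf : IsFinNonincreasing f) (ho : Orth f) (i : ℕ) (hi : i % 2 = 0) :
    Even (mult f i) := by
  rcases Nat.eq_zero_or_pos i with rfl | hpos
  · rw [hf.mult_zero]
    exact ⟨0, rfl⟩
  · exact ho i (Nat.even_iff.mpr hi) hpos

/-- If all values of parity `p` have even multiplicity, then under `SpecialPairs` every block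
of such a value starts at an odd index: the previous block either has the same parity and,
inductively, even length, or has the other parity, which `SpecialPairs` forbids across
`(2i - 1, 2i)`. -/
lemma odd_of_runStart (hf : IsFinNonincreasing f) {p : ℕ}
    (hp : ∀ i, i % 2 = p → Even (mult f i)) (hsp : SpecialPairs f) {x : ℕ} (hx : 1 ≤ x)
    (hs : RunStart f x) (hxp : f x % 2 = p) : Odd x := by
  induction x using Nat.strong_induction_on with
  | _ x ih =>
  rcases Nat.lt_or_ge x 2 with hx1 | hx2
  · obtain rfl : x = 1 := by omega
    exact odd_one
  have hne : f (x - 1) ≠ f x := hs.resolve_left (by omega)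
  have hlt : f x < f (x - 1) := lt_of_le_of_ne (hf.mono (by omega) (by omega)) (Ne.symm hne)
  by_cases hprev : f (x - 1) % 2 = p
  · obtain ⟨z, y, hzx, hxy, hrun⟩ := hf.exists_setOf_eq_Icc (j := x - 1) (by omega) (by omega)
    have hend : RunEnd f (x - 1) := by
      rw [RunEnd, Nat.sub_add_cancel (by omega)]
      exact hne.symm
    have hy : y = x - 1 := ((runEnd_iff_of_setOf_eq_Icc hrun ⟨hzx, hxy⟩).mp hend).symm
    have hz : 1 ≤ z ∧ f z = f (x - 1) := by
      have : z ∈ Set.Icc z y := ⟨le_rfl, hzx.trans hxy⟩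
      rwa [← hrun] at this
    have hzo := ih z (by omega) hz.1 ((runStart_iff_of_setOf_eq_Icc hrun
      ⟨le_rfl, hzx.trans hxy⟩).mpr rfl) (hz.2 ▸ hprev)
    have hm := hp _ hprev
    rw [mult_eq_of_setOf_eq_Icc hrun, hy] at hm
    obtain ⟨a, ha⟩ := hzo
    obtain ⟨b, hb⟩ := hm
    exact ⟨a + b, by omega⟩
  · by_contra hxo
    obtain ⟨i, rfl⟩ := Nat.not_odd_iff_even.mp hxo
    have := hsp i (by omega)
    rw [show 2 * i = i + i by ring] at this
    omega

lemma even_of_runEnd (hf : IsFinNonincreasing f) {p : ℕ}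
    (hp : ∀ i, i % 2 = p → Even (mult f i)) (hsp : SpecialPairs f) {y : ℕ} (hy : 1 ≤ y)
    (he : RunEnd f y) (hyp : f y % 2 = p) : Even y := by
  have hv : 1 ≤ f y := by
    have := hf.apply_lt_of_runEnd he hy (Nat.lt_succ_self y)
    omega
  obtain ⟨x, y', hxy, hyy', hrun⟩ := hf.exists_setOf_eq_Icc hy hv
  have hy' : y' = y :=
    ((runEnd_iff_of_setOf_eq_Icc hrun ⟨hxy, hyy'⟩).mp he).symm
  subst hy'
  have hx : 1 ≤ x ∧ f x = f y' := by
    have : x ∈ Set.Icc x y' := ⟨le_rfl, hxy.trans hyy'⟩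
    rwa [← hrun] at this
  have hxo := hf.odd_of_runStart hp hsp hx.1
    ((runStart_iff_of_setOf_eq_Icc hrun ⟨le_rfl, hxy.trans hyy'⟩).mpr rfl) (hx.2 ▸ hyp)
  have hm := hp _ hyp
  rw [mult_eq_of_setOf_eq_Icc hrun] at hm
  have := hxy.trans hyy'
  obtain ⟨a, ha⟩ := hxo
  obtain ⟨b, hb⟩ := hm
  exact ⟨a + b, by omega⟩

end IsFinNonincreasing

end Alignment

section Xi

variable {f1 f2 : ℕ → ℕ}

def EvenOdd (f1 f2 : ℕ → ℕ) (j : ℕ) : Prop := Even (f1 j) ∧ Odd (f2 j)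

lemma xi_eq_zero_of_not_evenOdd {j : ℕ} (h : ¬ EvenOdd f1 f2 j) : xi f1 f2 j = 0 := by
  have hplus : j ∉ JplusSet f1 f2 := fun hj => h ⟨hj.2.1, hj.2.2.1⟩
  have hminus : j ∉ JminusSet f1 f2 := fun hj => h ⟨hj.2.1, hj.2.2.1⟩
  simp only [xi, hplus, hminus, if_false]

lemma add_add_xi_nonneg (f1 f2 : ℕ → ℕ) (j : ℕ) : 0 ≤ (f1 j : ℤ) + f2 j + xi f1 f2 j := by
  unfold xi
  split_ifs with hplus hminus
  · omega
  · have := hminus.2.2.1.pos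
    omega
  · omega

/-- `ind(λ1, λ2) = λ1 + λ2 + ξ`; the truncation `toNat` never acts, by `add_add_xi_nonneg`. -/
noncomputable def ind (f1 f2 : ℕ → ℕ) (j : ℕ) : ℕ := ((f1 j : ℤ) + f2 j + xi f1 f2 j).toNat

lemma cast_ind (f1 f2 : ℕ → ℕ) (j : ℕ) : (ind f1 f2 j : ℤ) = f1 j + f2 j + xi f1 f2 j :=
  Int.toNat_of_nonneg (add_add_xi_nonneg f1 f2 j)

lemma IsFinNonincreasing.add (hf1 : IsFinNonincreasing f1) (hf2 : IsFinNonincreasing f2) :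
    IsFinNonincreasing (f1 + f2) := by
  obtain ⟨M1, hM1⟩ := hf1.fin
  obtain ⟨M2, hM2⟩ := hf2.fin
  exact ⟨fun j k hj hjk => Nat.add_le_add (hf1.mono hj hjk) (hf2.mono hj hjk),
    M1 + M2, fun j hj => by simp [hM1 j (by omega), hM2 j (by omega)]⟩

lemma runStart_add_iff (hf1 : IsFinNonincreasing f1) (hf2 : IsFinNonincreasing f2) {j : ℕ}
    (hj : 1 ≤ j) : RunStart (f1 + f2) j ↔ RunStart f1 j ∨ RunStart f2 j := by
  rcases Nat.lt_or_ge j 2 with hj1 | hj2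
  · simp [RunStart, show j = 1 by omega]
  have := hf1.mono (by omega : 1 ≤ j - 1) (by omega : j - 1 ≤ j)
  have := hf2.mono (by omega : 1 ≤ j - 1) (by omega : j - 1 ≤ j)
  simp only [RunStart, Pi.add_apply]
  omega

lemma runEnd_add_iff (hf1 : IsFinNonincreasing f1) (hf2 : IsFinNonincreasing f2) {j : ℕ}
    (hj : 1 ≤ j) : RunEnd (f1 + f2) j ↔ RunEnd f1 j ∨ RunEnd f2 j := by
  have := hf1.mono hj (by omega : j ≤ j + 1)
  have := hf2.mono hj (by omega : j ≤ j + 1)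
  simp only [RunEnd, Pi.add_apply]
  omega

lemma ind_eq_zero {j : ℕ} (h1 : f1 j = 0) (h2 : f2 j = 0) : ind f1 f2 j = 0 := by
  rw [ind, xi_eq_zero_of_not_evenOdd fun h => Nat.not_odd_zero (h2 ▸ h.2), h1, h2]
  rfl

lemma evenOdd_two_mul_iff (h1sp : SpecialPairs f1) (h2sp : SpecialPairs f2) {i : ℕ} (hi : 1 ≤ i) :
    EvenOdd f1 f2 (2 * i) ↔ EvenOdd f1 f2 (2 * i - 1) := by
  have h1 := h1sp i hi
  have h2 := h2sp i hi
  simp only [EvenOdd, Nat.even_iff, Nat.odd_iff]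
  omega

lemma xi_eq_zero_or (f1 f2 : ℕ → ℕ) (j : ℕ) :
    xi f1 f2 j = 0 ∨ EvenOdd f1 f2 j ∧ (xi f1 f2 j = 1 ∨ xi f1 f2 j = -1) := by
  unfold xi
  split_ifs with hplus hminus
  · exact Or.inr ⟨⟨hplus.2.1, hplus.2.2.1⟩, Or.inl rfl⟩
  · exact Or.inr ⟨⟨hminus.2.1, hminus.2.2.1⟩, Or.inr rfl⟩
  · exact Or.inl rfl

lemma ind_eq_iff_of_odd {v j : ℕ} (hv : Odd v) :
    ind f1 f2 j = v ↔ (f1 + f2) j = v ∧ xi f1 f2 j = 0 := by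
  rw [← Nat.cast_inj (R := ℤ), cast_ind, Pi.add_apply]
  rcases xi_eq_zero_or f1 f2 j with h | ⟨⟨he, ho⟩, h⟩
  · simp only [h, add_zero, and_true]
    exact_mod_cast Iff.rfl
  · rw [Nat.odd_iff] at hv ho
    rw [Nat.even_iff] at he
    omega

lemma odd_of_runStart_add (hf1 : IsFinNonincreasing f1) (hs1 : Symp f1) (h1sp : SpecialPairs f1)
    (hf2 : IsFinNonincreasing f2) (ho2 : Orth f2) (h2sp : SpecialPairs f2) {x : ℕ} (hx : 1 ≤ x)
    (hs : RunStart (f1 + f2) x) (h1 : Odd (f1 x)) (h2 : Even (f2 x)) : Odd x := by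
  rcases (runStart_add_iff hf1 hf2 hx).mp hs with hs | hs
  · exact hf1.odd_of_runStart (even_mult_of_symp hs1) h1sp hx hs (Nat.odd_iff.mp h1)
  · exact hf2.odd_of_runStart (hf2.even_mult_of_orth ho2) h2sp hx hs (Nat.even_iff.mp h2)

lemma even_of_runEnd_add (hf1 : IsFinNonincreasing f1) (hs1 : Symp f1) (h1sp : SpecialPairs f1)
    (hf2 : IsFinNonincreasing f2) (ho2 : Orth f2) (h2sp : SpecialPairs f2) {y : ℕ} (hy : 1 ≤ y)
    (he : RunEnd (f1 + f2) y) (h1 : Odd (f1 y)) (h2 : Even (f2 y)) : Even y := by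
  rcases (runEnd_add_iff hf1 hf2 hy).mp he with he | he
  · exact hf1.even_of_runEnd (even_mult_of_symp hs1) h1sp hy he (Nat.odd_iff.mp h1)
  · exact hf2.even_of_runEnd (hf2.even_mult_of_orth ho2) h2sp hy he (Nat.even_iff.mp h2)

lemma apply_eq_of_mem_run (hf1 : IsFinNonincreasing f1) (hf2 : IsFinNonincreasing f2)
    {v x y k : ℕ} (hrun : {k | 1 ≤ k ∧ (f1 + f2) k = v} = Set.Icc x y)
    (hk : k ∈ Set.Icc x y) : f1 k = f1 x ∧ f2 k = f2 x := by
  have hmem : ∀ {i}, i ∈ Set.Icc x y → 1 ≤ i ∧ f1 i + f2 i = v := fun hi => by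
    rw [← hrun] at hi
    exact hi
  have hx := hmem ⟨le_rfl, hk.1.trans hk.2⟩
  have := hf1.mono hx.1 hk.1
  have := hf2.mono hx.1 hk.1
  have := (hmem hk).2
  omega

lemma setOf_xi_eq_zero_of_not_evenOdd {v x y : ℕ}
    (hrun : {k | 1 ≤ k ∧ (f1 + f2) k = v} = Set.Icc x y)
    (h : ∀ k ∈ Set.Icc x y, ¬ EvenOdd f1 f2 k) :
    {k | 1 ≤ k ∧ (f1 + f2) k = v ∧ xi f1 f2 k = 0} = Set.Icc x y := by
  rw [← hrun]
  ext k
  refine ⟨fun hk => ⟨hk.1, hk.2.1⟩, fun hk => ⟨hk.1, hk.2, xi_eq_zero_of_not_evenOdd (h k ?_)⟩⟩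
  rwa [← hrun]

variable (hf1 : IsFinNonincreasing f1) (hs1 : Symp f1) (hf2 : IsFinNonincreasing f2)
  (ho2 : Orth f2) (hE2 : Even (OddSet f2).ncard)
include hf1 hs1 hf2 ho2 hE2

lemma xi_of_odd {j : ℕ} (hj : 1 ≤ j) (hjo : Odd j) :
    xi f1 f2 j = if EvenOdd f1 f2 j ∧ RunStart (f1 + f2) j then 1 else 0 := by
  have hplus : j ∈ JplusSet f1 f2 ↔ EvenOdd f1 f2 j ∧ RunStart (f1 + f2) j := by
    simp only [JplusSet, Set.mem_ofPred_eq, hf1.exists_isIntervalS_isLeast_iff hs1 hj,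
      hf2.exists_isIntervalOE_isLeast_iff ho2 hE2 hj, runStart_add_iff hf1 hf2 hj, EvenOdd]
    tauto
  have hminus : j ∉ JminusSet f1 f2 := by
    rintro ⟨-, -, -, h | h⟩
    · exact Nat.not_even_iff_odd.mpr hjo ((hf1.exists_isIntervalS_isGreatest_iff hs1 hj).mp h).1
    · exact Nat.not_even_iff_odd.mpr hjo
        ((hf2.exists_isIntervalOE_isGreatest_iff ho2 hE2 hj).mp h).1
  simp only [xi, hplus, hminus, if_false]

lemma xi_of_even {j : ℕ} (hj : 1 ≤ j) (hje : Even j) :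
    xi f1 f2 j = if EvenOdd f1 f2 j ∧ RunEnd (f1 + f2) j then -1 else 0 := by
  have hplus : j ∉ JplusSet f1 f2 := by
    rintro ⟨-, -, -, h | h⟩
    · exact Nat.not_even_iff_odd.mpr ((hf1.exists_isIntervalS_isLeast_iff hs1 hj).mp h).1 hje
    · exact Nat.not_even_iff_odd.mpr
        ((hf2.exists_isIntervalOE_isLeast_iff ho2 hE2 hj).mp h).1 hje
  have hminus : j ∈ JminusSet f1 f2 ↔ EvenOdd f1 f2 j ∧ RunEnd (f1 + f2) j := by
    simp only [JminusSet, Set.mem_ofPred_eq, hf1.exists_isIntervalS_isGreatest_iff hs1 hj,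
      hf2.exists_isIntervalOE_isGreatest_iff ho2 hE2 hj, runEnd_add_iff hf1 hf2 hj, EvenOdd]
    tauto
  simp only [xi, hplus, hminus, if_false]

lemma ind_succ_le {j : ℕ} (hj : 1 ≤ j) : ind f1 f2 (j + 1) ≤ ind f1 f2 j := by
  have := hf1.mono hj (by omega : j ≤ j + 1)
  have := hf2.mono hj (by omega : j ≤ j + 1)
  zify
  rw [cast_ind, cast_ind]
  rcases Nat.even_or_odd j with hje | hjo
  · rw [xi_of_even hf1 hs1 hf2 ho2 hE2 hj hje, xi_of_odd hf1 hs1 hf2 ho2 hE2 (by omega) hje.add_one]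
    simp only [EvenOdd, RunStart, RunEnd, Pi.add_apply, Nat.even_iff, Nat.odd_iff,
      add_tsub_cancel_right]
    split_ifs <;> omega
  · rw [xi_of_odd hf1 hs1 hf2 ho2 hE2 hj hjo, xi_of_even hf1 hs1 hf2 ho2 hE2 (by omega) hjo.add_one]
    split_ifs <;> omega

lemma xi_add_xi_succ {j : ℕ} (hj : 1 ≤ j) (hje : Even j) :
    xi f1 f2 j + xi f1 f2 (j + 1) =
      (if EvenOdd f1 f2 (j + 1) then 1 else 0) - (if EvenOdd f1 f2 j then 1 else 0) := by
  have := hf1.mono hj (by omega : j ≤ j + 1)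
  have := hf2.mono hj (by omega : j ≤ j + 1)
  rw [xi_of_even hf1 hs1 hf2 ho2 hE2 hj hje, xi_of_odd hf1 hs1 hf2 ho2 hE2 (by omega) hje.add_one]
  simp only [EvenOdd, RunStart, RunEnd, Pi.add_apply, Nat.even_iff, Nat.odd_iff,
    add_tsub_cancel_right]
  split_ifs <;> omega

lemma sz_xi_two_mul_add_one (h1sp : SpecialPairs f1) (h2sp : SpecialPairs f2) (K : ℕ) :
    Sz (xi f1 f2) (2 * K + 1) = if EvenOdd f1 f2 (2 * K + 1) then 1 else 0 := by
  induction K with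
  | zero =>
    simp [Sz, xi_of_odd hf1 hs1 hf2 ho2 hE2 le_rfl odd_one, RunStart]
  | succ K ih =>
    have hpair := xi_add_xi_succ hf1 hs1 hf2 ho2 hE2 (j := 2 * K + 2) (by omega) ⟨K + 1, by ring⟩
    have hEO := evenOdd_two_mul_iff h1sp h2sp (i := K + 1) (by omega)
    rw [show 2 * (K + 1) = 2 * K + 2 by ring, show 2 * K + 2 - 1 = 2 * K + 1 by omega] at hEO
    rw [show 2 * (K + 1) + 1 = 2 * K + 1 + 1 + 1 by ring, Sz, Finset.sum_Icc_succ_top (by omega),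
      Finset.sum_Icc_succ_top (by omega), ← Sz, ih, add_assoc, hpair, if_congr hEO rfl rfl]
    ring

lemma S_ind_of_odd (h1sp : SpecialPairs f1) (h2sp : SpecialPairs f2) {m : ℕ} (hm : Odd m)
    (h2m : f2 m = 0) : S (ind f1 f2) m = S f1 m + S f2 m := by
  obtain ⟨K, rfl⟩ := hm
  have hsz := sz_xi_two_mul_add_one hf1 hs1 hf2 ho2 hE2 h1sp h2sp K
  rw [if_neg fun h => Nat.not_odd_zero (h2m ▸ h.2), Sz] at hsz
  zify
  simp only [S, Nat.cast_sum, cast_ind, Finset.sum_add_distrib, hsz, add_zero]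

lemma xi_eq_zero_iff_of_mem_run {v x y k : ℕ}
    (hrun : {k | 1 ≤ k ∧ (f1 + f2) k = v} = Set.Icc x y) (hk : k ∈ Set.Icc x y)
    (hEO : EvenOdd f1 f2 k) : xi f1 f2 k = 0 ↔ (Odd k → k ≠ x) ∧ (Even k → k ≠ y) := by
  have hk1 : 1 ≤ k := by
    have := hk
    rw [← hrun] at this
    exact this.1
  rcases Nat.even_or_odd k with hke | hko
  · rw [xi_of_even hf1 hs1 hf2 ho2 hE2 hk1 hke, runEnd_iff_of_setOf_eq_Icc hrun hk]
    simp [hEO, hke, Nat.not_odd_iff_even.mpr hke]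
  · rw [xi_of_odd hf1 hs1 hf2 ho2 hE2 hk1 hko, runStart_iff_of_setOf_eq_Icc hrun hk]
    simp [hEO, hko, Nat.not_even_iff_odd.mpr hko]

/-- On a block of `λ1 + λ2` on which `λ_{1,j}` is even and `λ_{2,j}` odd, `ξ` is `1` at the
first index if that is odd, `-1` at the last index if that is even, and `0` elsewhere. -/
lemma setOf_xi_eq_zero_of_evenOdd {v x y : ℕ}
    (hrun : {k | 1 ≤ k ∧ (f1 + f2) k = v} = Set.Icc x y)
    (h : ∀ k ∈ Set.Icc x y, EvenOdd f1 f2 k) :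
    {k | 1 ≤ k ∧ (f1 + f2) k = v ∧ xi f1 f2 k = 0} = Set.Icc (x + x % 2) (y + y % 2 - 1) := by
  ext k
  have hk : k ∈ {k | 1 ≤ k ∧ (f1 + f2) k = v} ↔ k ∈ Set.Icc x y := by rw [hrun]
  have hxi := fun (hk : k ∈ Set.Icc x y) =>
    xi_eq_zero_iff_of_mem_run hf1 hs1 hf2 ho2 hE2 hrun hk (h k hk)
  simp only [Set.mem_ofPred_eq, Set.mem_Icc, Nat.odd_iff, Nat.even_iff] at hk hxi ⊢
  constructor
  · rintro ⟨hk1, hkv, hk0⟩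
    have := (hxi (hk.mp ⟨hk1, hkv⟩)).mp hk0
    omega
  · intro hk'
    have hk'' : x ≤ k ∧ k ≤ y := by omega
    exact ⟨(hk.mpr hk'').1, (hk.mpr hk'').2, (hxi hk'').mpr (by omega)⟩

theorem symp_ind (h1sp : SpecialPairs f1) (h2sp : SpecialPairs f2) : Symp (ind f1 f2) := by
  intro v hv
  have hset : {j | 1 ≤ j ∧ ind f1 f2 j = v} =
      {j | 1 ≤ j ∧ (f1 + f2) j = v ∧ xi f1 f2 j = 0} := by
    simp only [ind_eq_iff_of_odd hv]
  rw [mult, hset]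
  by_cases hex : ∃ j, 1 ≤ j ∧ (f1 + f2) j = v
  swap
  · have hempty : {j | 1 ≤ j ∧ (f1 + f2) j = v ∧ xi f1 f2 j = 0} = ∅ :=
      Set.eq_empty_of_forall_notMem fun j hj => hex ⟨j, hj.1, hj.2.1⟩
    rw [hempty, Set.ncard_empty]
    exact ⟨0, rfl⟩
  obtain ⟨j0, hj0, hv0⟩ := hex
  obtain ⟨x, y, hx, hy, hrun⟩ := (hf1.add hf2).exists_setOf_eq_Icc hj0 (hv0 ▸ hv.pos)
  rw [hv0] at hrun
  have hxy : x ≤ y := hx.trans hy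
  obtain ⟨hx1, hvx⟩ : 1 ≤ x ∧ f1 x + f2 x = v := by
    have : x ∈ Set.Icc x y := ⟨le_rfl, hxy⟩
    rw [← hrun] at this
    exact this
  have hconst := fun k (hk : k ∈ Set.Icc x y) => apply_eq_of_mem_run hf1 hf2 hrun hk
  rcases Nat.even_or_odd (f1 x) with h1e | h1o
  · have hEO : ∀ k ∈ Set.Icc x y, EvenOdd f1 f2 k := fun k hk => by
      rw [EvenOdd, (hconst k hk).1, (hconst k hk).2]
      refine ⟨h1e, ?_⟩
      rw [Nat.odd_iff] at hv ⊢
      rw [Nat.even_iff] at h1e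
      omega
    rw [setOf_xi_eq_zero_of_evenOdd hf1 hs1 hf2 ho2 hE2 hrun hEO, Set.ncard_Icc_nat]
    exact ⟨(y + y % 2) / 2 - (x + x % 2) / 2, by omega⟩
  · have h2e : Even (f2 x) := by
      rw [Nat.odd_iff] at hv h1o
      rw [Nat.even_iff]
      omega
    rw [setOf_xi_eq_zero_of_not_evenOdd hrun fun k hk h =>
      Nat.not_even_iff_odd.mpr h1o ((hconst k hk).1 ▸ h.1), Set.ncard_Icc_nat]
    obtain ⟨a, ha⟩ := odd_of_runStart_add hf1 hs1 h1sp hf2 ho2 h2sp hx1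
      ((runStart_iff_of_setOf_eq_Icc hrun ⟨le_rfl, hxy⟩).mpr rfl) h1o h2e
    obtain ⟨b, hb⟩ := even_of_runEnd_add hf1 hs1 h1sp hf2 ho2 h2sp (hx1.trans hxy)
      ((runEnd_iff_of_setOf_eq_Icc hrun ⟨hxy, le_rfl⟩).mpr rfl)
      ((hconst y ⟨hxy, le_rfl⟩).1 ▸ h1o) ((hconst y ⟨hxy, le_rfl⟩).2 ▸ h2e)
    exact ⟨b - a, by omega⟩

end Xi

lemma S_eq_of_le {f : ℕ → ℕ} {m m' : ℕ} (hle : m ≤ m') (h0 : ∀ j, m < j → f j = 0) :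
    S f m' = S f m :=
  (Finset.sum_subset (Finset.Icc_subset_Icc_right hle) fun x hx hnx => h0 x (by
    simp only [Finset.mem_Icc, not_and, not_le] at hx hnx
    exact hnx hx.1)).symm

theorem isPartition_ind {f1 f2 : ℕ → ℕ} {n1 n2 : ℕ} (h1 : IsPartition f1 (2 * n1))
    (hs1 : Symp f1) (h1sp : SpecialPairs f1) (h2 : IsPartition f2 (2 * n2)) (ho2 : Orth f2)
    (h2sp : SpecialPairs f2) : IsPartition (ind f1 f2) (2 * (n1 + n2)) := by
  have hf1 := h1.isFinNonincreasing
  have hf2 := h2.isFinNonincreasing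
  have hE2 := h2.even_ncard_oddSet ho2
  obtain ⟨M1, hM1⟩ := h1.fin
  obtain ⟨M2, hM2⟩ := h2.fin
  refine ⟨fun j k hj hjk => ?_, ⟨M1 + M2, fun j hj => ind_eq_zero (hM1 j (by omega))
    (hM2 j (by omega))⟩, fun m hm => ?_⟩
  · induction k, hjk using Nat.le_induction with
    | base => exact le_rfl
    | succ k hjk ih => exact (ind_succ_le hf1 hs1 hf2 ho2 hE2 (hj.trans hjk)).trans ih
  · set W := 2 * (m + M1 + M2) + 1
    rw [← S_eq_of_le (by omega : m ≤ W) hm,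
      S_ind_of_odd hf1 hs1 hf2 ho2 hE2 h1sp h2sp ⟨m + M1 + M2, rfl⟩ (hM2 W (by omega)),
      h1.total W fun j hj => hM1 j (by omega), h2.total W fun j hj => hM2 j (by omega)]
    ring

/-- Section 1.9: `ind(λ1, λ2) = λ1 + λ2 + ξ` is a (nonincreasing) symplectic
partition of `2(n1+n2)`. -/
theorem stmt7 (n1 n2 : ℕ)
    (f1 : ℕ → ℕ) (h1 : IsPartition f1 (2*n1)) (h1s : Symp f1) (h1sp : SpecialPairs f1)
    (f2 : ℕ → ℕ) (h2 : IsPartition f2 (2*n2)) (h2o : Orth f2) (h2sp : SpecialPairs f2) :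
    ∃ g : ℕ → ℕ,
      (∀ j, 1 ≤ j → (g j : ℤ) = (f1 j : ℤ) + (f2 j : ℤ) + xi f1 f2 j) ∧
      IsPartition g (2*(n1+n2)) ∧ Symp g :=
  ⟨ind f1 f2, fun j _ => cast_ind f1 f2 j, isPartition_ind h1 h1s h1sp h2 h2o h2sp,
    symp_ind h1.isFinNonincreasing h1s h2.isFinNonincreasing h2o (h2.even_ncard_oddSet h2o)
      h1sp h2sp⟩

end Wald
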